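/- arXiv:1903.06804 — 3 statements merged into one kernel-verified Lean document; each statement's English description precedes it below -/
import Mathlib

section
/- For any norm ‖·‖ on ℝⁿ, any λ ≥ 0, vectors ζ̂, b ∈ ℝⁿ and scalar a ∈ ℝ, the value sup_{ζ ∈ ℝⁿ} ( a·⟨ζ, b⟩ − λ‖ζ − ζ̂‖ ) equals a·⟨ζ̂, b⟩ if |a|·‖b‖_* ≤ λ, and equals +∞ otherwise. -/
/-!
Write `z = ζ̂ + w`: the objective becomes `f ζ̂ + (f w - λ‖w‖)` with `f = a⟨·, b⟩`, a linear
functional whose operator norm for `‖·‖` is `|a|‖b‖_*`. If `‖f‖ ≤ λ` the bracket is `≤ 0`, with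
equality at `w = 0`. Otherwise some `w` with `‖w‖ < 1` has `f w > λ`, and along the ray `t • w`
the objective grows at least like `t (f w - λ)`.
-/

open scoped BigOperators

/-- The dual norm `‖θ‖_* = sup_{‖y‖ ≤ 1} ⟨θ, y⟩` of a norm `N`. -/
noncomputable def dualNorm {n : ℕ} (N : (Fin n → ℝ) → ℝ) (θ : Fin n → ℝ) : ℝ :=
  sSup {r : ℝ | ∃ y : Fin n → ℝ, N y ≤ 1 ∧ r = ∑ i, θ i * y i}

open Filter

namespace ContinuousLinearMap

variable {E : Type*} [NormedAddCommGroup E] [NormedSpace ℝ E] (f : E →L[ℝ] ℝ)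

theorem exists_norm_lt_one_lt_apply_of_lt_opNorm {r : ℝ} (hr : r < ‖f‖) :
    ∃ y, ‖y‖ < 1 ∧ r < f y := by
  obtain ⟨x, hx, hrx⟩ := f.exists_lt_apply_of_lt_opNorm hr
  rcases le_total 0 (f x) with hfx | hfx
  · exact ⟨x, hx, by rwa [Real.norm_of_nonneg hfx] at hrx⟩
  · exact ⟨-x, by rwa [norm_neg], by rwa [map_neg, ← Real.norm_of_nonpos hfx]⟩

theorem sSup_apply_unitClosedBall_eq_norm : sSup {r | ∃ y, ‖y‖ ≤ 1 ∧ r = f y} = ‖f‖ := by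
  refine csSup_eq_of_forall_le_of_forall_lt_exists_gt ⟨0, 0, by simp, by simp⟩ ?_ ?_
  · rintro - ⟨y, hy, rfl⟩
    exact (Real.le_norm_self _).trans (f.unit_le_opNorm y hy)
  · intro r hr
    obtain ⟨y, hy, hry⟩ := f.exists_norm_lt_one_lt_apply_of_lt_opNorm hr
    exact ⟨f y, ⟨y, hy.le, rfl⟩, hry⟩

variable {lam : ℝ} (x₀ : E)

theorem apply_sub_mul_norm_sub_le (h : ‖f‖ ≤ lam) (x : E) : f x - lam * ‖x - x₀‖ ≤ f x₀ := by
  have hle : f (x - x₀) ≤ ‖f‖ * ‖x - x₀‖ := (Real.le_norm_self _).trans (f.le_opNorm _)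
  calc f x - lam * ‖x - x₀‖ = f x₀ + (f (x - x₀) - lam * ‖x - x₀‖) := by rw [map_sub]; ring
    _ ≤ f x₀ := by nlinarith [norm_nonneg (x - x₀)]

theorem exists_lt_apply_sub_mul_norm_sub (hlam : 0 ≤ lam) (h : lam < ‖f‖) (M : ℝ) :
    ∃ x, M < f x - lam * ‖x - x₀‖ := by
  obtain ⟨y, hy, hlamy⟩ := f.exists_norm_lt_one_lt_apply_of_lt_opNorm h
  have hlim : Tendsto (fun t : ℝ => f x₀ + t * (f y - lam)) atTop atTop :=
    tendsto_atTop_add_const_left _ _ (tendsto_id.atTop_mul_const (sub_pos.2 hlamy))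
  obtain ⟨t, ht, hM⟩ := ((eventually_ge_atTop 0).and (hlim.eventually_gt_atTop M)).exists
  refine ⟨x₀ + t • y, hM.trans_le ?_⟩
  rw [add_sub_cancel_left, norm_smul, Real.norm_of_nonneg ht, map_add, map_smul, smul_eq_mul]
  nlinarith [mul_le_mul_of_nonneg_left hy.le (mul_nonneg hlam ht)]

theorem iSup_apply_sub_mul_norm_sub (hlam : 0 ≤ lam) :
    ⨆ x, ((f x - lam * ‖x - x₀‖ : ℝ) : EReal) = if ‖f‖ ≤ lam then (f x₀ : EReal) else ⊤ := by
  split_ifs with h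
  · exact le_antisymm (iSup_le fun x => EReal.coe_le_coe (f.apply_sub_mul_norm_sub_le x₀ h x))
      (le_iSup_of_le x₀ (by simp))
  · refine (EReal.eq_top_iff_forall_lt _).2 fun M => ?_
    obtain ⟨x, hx⟩ := f.exists_lt_apply_sub_mul_norm_sub x₀ hlam (not_le.1 h) M
    exact lt_iSup_iff.2 ⟨x, EReal.coe_lt_coe hx⟩

end ContinuousLinearMap

/-- A copy of `Fin n → ℝ` that can carry the norm `N` in place of the sup norm. -/
def PiWithNorm {n : ℕ} (_N : (Fin n → ℝ) → ℝ) : Type := Fin n → ℝ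

namespace PiWithNorm

variable {n : ℕ} {N : (Fin n → ℝ) → ℝ}

instance : AddCommGroup (PiWithNorm N) := Pi.addCommGroup
instance : Module ℝ (PiWithNorm N) := Pi.module _ _ _
instance : FiniteDimensional ℝ (PiWithNorm N) := inferInstanceAs (FiniteDimensional ℝ (Fin n → ℝ))
instance : Norm (PiWithNorm N) := ⟨N⟩

theorem normedSpaceCore (hN0 : ∀ x, 0 ≤ N x) (hNeq : ∀ x, N x = 0 ↔ x = 0)
    (hNsmul : ∀ (c : ℝ) (x : Fin n → ℝ), N (c • x) = |c| * N x)
    (hNadd : ∀ x y, N (x + y) ≤ N x + N y) : NormedSpace.Core ℝ (PiWithNorm N) where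
  norm_nonneg := hN0
  norm_smul := hNsmul
  norm_triangle := hNadd
  norm_eq_zero_iff := hNeq

end PiWithNorm

/-- Scalar robust-regularization identity: for any norm `N` on `ℝⁿ`, `λ ≥ 0`,
`ζ̂, b ∈ ℝⁿ` and `a ∈ ℝ`, the value `sup_ζ (a⟨ζ,b⟩ − λ‖ζ − ζ̂‖)` equals `a⟨ζ̂,b⟩`
if `|a|·‖b‖_* ≤ λ`, and `+∞` otherwise. -/
theorem scalar_robust_regularization (n : ℕ) (N : (Fin n → ℝ) → ℝ)
    (hN0 : ∀ x, 0 ≤ N x) (hNeq : ∀ x, N x = 0 ↔ x = 0)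
    (hNsmul : ∀ (c : ℝ) (x : Fin n → ℝ), N (c • x) = |c| * N x)
    (hNadd : ∀ x y, N (x + y) ≤ N x + N y)
    (lam : ℝ) (hlam : 0 ≤ lam) (zhat b : Fin n → ℝ) (a : ℝ) :
    (⨆ z : Fin n → ℝ, ((a * (∑ i, z i * b i) - lam * N (z - zhat) : ℝ) : EReal))
      = if |a| * dualNorm N b ≤ lam
        then ((a * ∑ i, zhat i * b i : ℝ) : EReal) else ⊤ := by
  let core := PiWithNorm.normedSpaceCore hN0 hNeq hNsmul hNadd
  let _ := NormedAddCommGroup.ofCore core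
  let _ := NormedSpace.ofCore core
  let ℓ : PiWithNorm N →L[ℝ] ℝ := LinearMap.toContinuousLinearMap (dotProductBilin ℝ ℝ b)
  -- `hdual` and the final `exact` are definitional: on `PiWithNorm N`, `‖y‖` unfolds to `N y`
  -- and `ℓ y` to `∑ i, b i * y i`
  have hdual : dualNorm N b = ‖ℓ‖ := ℓ.sSup_apply_unitClosedBall_eq_norm
  have key := (a • ℓ).iSup_apply_sub_mul_norm_sub zhat hlam
  rw [norm_smul, Real.norm_eq_abs, ← hdual] at key
  simp_rw [mul_comm _ (b _)]
  exact key
end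

section
/- Let L : ℝʳ → ℝ be convex and continuous with bounded conjugate domain Θ = {θ : L*(θ) < ∞}, let ‖·‖ be a norm on ℝ^q with dual norm ‖·‖_*, let λ > 0, b ∈ ℝ^q, and ζ̂₁,…,ζ̂ᵣ ∈ ℝ^q. Then sup over ζ₁,…,ζᵣ ∈ ℝ^q of L(⟨ζ₁,b⟩,…,⟨ζᵣ,b⟩) − λ·Σⱼ‖ζⱼ − ζ̂ⱼ‖ equals L(⟨ζ̂₁,b⟩,…,⟨ζ̂ᵣ,b⟩) if sup_{θ ∈ Θ} ‖θ‖_∞ · ‖b‖_* ≤ λ, and equals +∞ otherwise. -/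
open scoped BigOperators

/-- The convex conjugate `L*(θ) = sup_s ⟨θ,s⟩ - L(s)`. -/
noncomputable def fenchelConj {n : ℕ} (L : (Fin n → ℝ) → ℝ) (θ : Fin n → ℝ) : EReal :=
  ⨆ s : Fin n → ℝ, (((∑ j, θ j * s j) - L s : ℝ) : EReal)

/-!
Write `s(z) = (⟨z₁,b⟩,…,⟨zᵣ,b⟩)`. Every slope `θ` of `L` lies in `Θ = dom L*`, and conversely
`L s ≥ ⟨θ,s⟩ - L*(θ)` for `θ ∈ Θ`; so both sides are governed by the condition
`θⱼ ⟨v,b⟩ ≤ λ ‖v‖` for all `θ ∈ Θ`, `j`, `v`, which is a reformulation of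
`sup_Θ ‖θ‖_∞ · ‖b‖_* ≤ λ`. If it holds, a subgradient `θ` of `L` at `s(z)` gives
`L(s(z)) ≤ L(s(ẑ)) + Σⱼ θⱼ ⟨zⱼ - ẑⱼ, b⟩ ≤ L(s(ẑ)) + λ Σⱼ ‖zⱼ - ẑⱼ‖`, with equality at `z = ẑ`.
If it fails for `θ`, `j` and `v`, moving `ẑⱼ` along the ray `t v` makes the objective grow
at least linearly in `t`.
-/

open Set Topology

theorem ConvexOn.exists_subgradient {E : Type*} [TopologicalSpace E] [AddCommGroup E]
    [Module ℝ E] [IsTopologicalAddGroup E] [ContinuousSMul ℝ E] {f : E → ℝ}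
    (hf : ConvexOn ℝ univ f) (hfc : Continuous f) (x₀ : E) :
    ∃ g : StrongDual ℝ E, ∀ x, f x₀ + g (x - x₀) ≤ f x := by
  obtain ⟨φ, hφ⟩ := geometric_hahn_banach_open_point (s := {p : E × ℝ | f p.1 < p.2})
    (x := (x₀, f x₀)) (by simpa using hf.convex_strict_epigraph)
    (isOpen_lt (hfc.comp continuous_fst) continuous_snd) (lt_irrefl (f x₀))
  simp only [mem_ofPred_eq] at hφ
  set c := φ (0, 1)
  have hsplit : ∀ x t, φ (x, t) = φ (x, 0) + t * c := fun x t => by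
    rw [← smul_eq_mul, ← map_smul, ← map_add]; simp
  have hc : c < 0 := by
    have := hφ (x₀, f x₀ + 1) (by simp)
    rw [hsplit, hsplit x₀ (f x₀)] at this
    linarith
  -- letting `t ↓ f x` in `φ (x, t) < φ (x₀, f x₀)`
  have hgraph : ∀ x, φ (x, f x) ≤ φ (x₀, f x₀) := fun x =>
    le_of_tendsto (x := 𝓝[>] (f x))
      ((φ.continuous.comp (Continuous.prodMk_right x)).tendsto (f x) |>.mono_left
        nhdsWithin_le_nhds)
      (eventually_nhdsWithin_of_forall fun t ht => (hφ (x, t) ht).le)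
  refine ⟨(-c⁻¹) • φ.comp (ContinuousLinearMap.inl ℝ E ℝ), fun x => ?_⟩
  have hx := hgraph x
  rw [hsplit, hsplit x₀] at hx
  have hg : ((-c⁻¹) • φ.comp (ContinuousLinearMap.inl ℝ E ℝ)) (x - x₀) =
      (φ (x₀, 0) - φ (x, 0)) / c := by
    rw [FunLike.coe_smul, Pi.smul_apply, ContinuousLinearMap.comp_apply,
      ContinuousLinearMap.inl_apply, ← sub_zero (0 : ℝ), ← Prod.mk_sub_mk, map_sub]
    simp only [smul_eq_mul, sub_zero]
    ring
  rw [hg, ← le_sub_iff_add_le', div_le_iff_of_neg hc]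
  linarith

theorem fenchelConj_lt_top_iff {n : ℕ} {L : (Fin n → ℝ) → ℝ} {θ : Fin n → ℝ} :
    fenchelConj L θ < ⊤ ↔ ∃ M : ℝ, ∀ s, θ ⬝ᵥ s - L s ≤ M := by
  constructor
  · intro h
    obtain ⟨M, hM, -⟩ := EReal.exists_between_coe_real h
    exact ⟨M, fun s => EReal.coe_le_coe_iff.1 ((le_iSup_of_le s le_rfl).trans hM.le)⟩
  · rintro ⟨M, hM⟩
    exact (iSup_le fun s => EReal.coe_le_coe_iff.2 (hM s)).trans_lt (EReal.coe_lt_top M)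

theorem ConvexOn.exists_fenchelConj_lt_top_subgradient {n : ℕ} {L : (Fin n → ℝ) → ℝ}
    (hL : ConvexOn ℝ univ L) (hLc : Continuous L) (s₀ : Fin n → ℝ) :
    ∃ θ, fenchelConj L θ < ⊤ ∧ ∀ s, L s₀ + θ ⬝ᵥ (s - s₀) ≤ L s := by
  obtain ⟨g, hg⟩ := hL.exists_subgradient hLc s₀
  set θ := (dotProductEquiv ℝ (Fin n)).symm (g : Module.Dual ℝ (Fin n → ℝ))
  have hθ : ∀ s, g s = θ ⬝ᵥ s := fun s =>
    (LinearMap.congr_fun ((dotProductEquiv ℝ (Fin n)).apply_symm_apply _) s).symm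
  refine ⟨θ, fenchelConj_lt_top_iff.2 ⟨θ ⬝ᵥ s₀ - L s₀, fun s => ?_⟩, fun s => hθ (s - s₀) ▸ hg s⟩
  have := hg s
  rw [hθ, dotProduct_sub] at this
  linarith

theorem Seminorm.isCompact_setOf_le {E : Type*} [NormedAddCommGroup E] [NormedSpace ℝ E]
    [FiniteDimensional ℝ E] (p : Seminorm ℝ E) (hp : ∀ x, p x = 0 → x = 0) (R : ℝ) :
    IsCompact {x | p x ≤ R} := by
  have hpc : Continuous p := continuousOn_univ.1 (p.convexOn.continuousOn isOpen_univ)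
  refine Metric.isCompact_of_isClosed_isBounded (isClosed_le hpc continuous_const) ?_
  rcases subsingleton_or_nontrivial E with hE | hE
  · exact Bornology.IsBounded.all _
  obtain ⟨z, hz, hzmin⟩ := (isCompact_sphere (0 : E) 1).exists_isMinOn
    (NormedSpace.sphere_nonempty.2 zero_le_one) hpc.continuousOn
  have hz0 : 0 < p z := (apply_nonneg p z).lt_of_ne fun h => by
    simp [hp z h.symm] at hz
  have hlow : ∀ x, p z * ‖x‖ ≤ p x := fun x => by
    rcases eq_or_ne x 0 with rfl | hx
    · simp
    have hx' : 0 < ‖x‖ := norm_pos_iff.2 hx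
    have := isMinOn_iff.1 hzmin (‖x‖⁻¹ • x) (by simp [norm_smul, hx'.ne'])
    rw [map_smul_eq_mul, norm_inv, norm_norm, le_inv_mul_iff₀ hx'] at this
    linarith
  refine (Metric.isBounded_closedBall (x := (0 : E)) (r := R / p z)).subset fun x hx => ?_
  rw [mem_closedBall_zero_iff, le_div_iff₀ hz0, mul_comm]
  exact (hlow x).trans hx

section DualNorm

variable {q : ℕ} (p : Seminorm ℝ (Fin q → ℝ))

theorem dualNorm_set_bddAbove (hp : ∀ x, p x = 0 → x = 0) (b : Fin q → ℝ) :
    BddAbove {r : ℝ | ∃ y : Fin q → ℝ, p y ≤ 1 ∧ r = ∑ i, b i * y i} := by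
  have : {r : ℝ | ∃ y : Fin q → ℝ, p y ≤ 1 ∧ r = ∑ i, b i * y i} =
      (b ⬝ᵥ ·) '' {y | p y ≤ 1} :=
    Set.ext fun r => exists_congr fun y => and_congr_right' eq_comm
  rw [this]
  exact (p.isCompact_setOf_le hp 1).bddAbove_image (by fun_prop)

theorem dualNorm_nonneg (b : Fin q → ℝ) : 0 ≤ dualNorm p b :=
  Real.sSup_nonneg' ⟨0, ⟨0, by simp, by simp⟩, le_rfl⟩

theorem dotProduct_le_dualNorm_mul (hp : ∀ x, p x = 0 → x = 0) (b v : Fin q → ℝ) :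
    b ⬝ᵥ v ≤ dualNorm p b * p v := by
  rcases eq_or_ne v 0 with rfl | hv
  · simp
  have hv' : 0 < p v := (apply_nonneg p v).lt_of_ne fun h => hv (hp v h.symm)
  rw [← div_le_iff₀ hv', div_eq_inv_mul, ← smul_eq_mul, ← dotProduct_smul]
  refine le_csSup (dualNorm_set_bddAbove p hp b) ⟨(p v)⁻¹ • v, ?_, rfl⟩
  rw [map_smul_eq_mul, Real.norm_eq_abs, abs_inv, abs_of_pos hv', inv_mul_cancel₀ hv'.ne']

theorem abs_dotProduct_le_dualNorm_mul (hp : ∀ x, p x = 0 → x = 0) (b v : Fin q → ℝ) :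
    |b ⬝ᵥ v| ≤ dualNorm p b * p v := by
  refine abs_le.2 ⟨?_, dotProduct_le_dualNorm_mul p hp b v⟩
  have := dotProduct_le_dualNorm_mul p hp b (-v)
  rw [dotProduct_neg, map_neg_eq_map] at this
  linarith

theorem mul_dualNorm_le_iff (hp : ∀ x, p x = 0 → x = 0) {a lam : ℝ} (hlam : 0 ≤ lam)
    (b : Fin q → ℝ) : |a| * dualNorm p b ≤ lam ↔ ∀ v, a * (v ⬝ᵥ b) ≤ lam * p v := by
  constructor
  · intro h v
    calc a * (v ⬝ᵥ b) ≤ |a| * |b ⬝ᵥ v| := by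
          rw [dotProduct_comm, ← abs_mul]; exact le_abs_self _
      _ ≤ |a| * dualNorm p b * p v := by
          rw [mul_assoc]; gcongr; exact abs_dotProduct_le_dualNorm_mul p hp b v
      _ ≤ lam * p v := by gcongr
  · intro h
    rcases eq_or_ne a 0 with rfl | ha
    · simpa using hlam
    have ha' : 0 < |a| := abs_pos.2 ha
    rw [mul_comm, ← le_div_iff₀ ha']
    refine Real.sSup_le ?_ (div_nonneg hlam ha'.le)
    rintro _ ⟨y, hy, rfl⟩
    -- testing against `a • y` turns the factor `a` into `a * a = |a| * |a|`
    have := h (a • y)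
    rw [smul_dotProduct, map_smul_eq_mul, Real.norm_eq_abs, smul_eq_mul, ← mul_assoc,
      ← abs_mul_abs_self, mul_assoc, mul_left_comm lam, dotProduct_comm] at this
    rw [le_div_iff₀ ha', mul_comm]
    exact (le_of_mul_le_mul_left this ha').trans (mul_le_of_le_one_right hlam hy)

end DualNorm

theorem Real.sSup_mul_le_iff {s : Set ℝ} (hs : BddAbove s) {c d : ℝ} (hc : 0 ≤ c) (hd : 0 ≤ d) :
    sSup s * c ≤ d ↔ ∀ x ∈ s, x * c ≤ d := by
  refine ⟨fun h x hx => (mul_le_mul_of_nonneg_right (le_csSup hs hx) hc).trans h, fun h => ?_⟩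
  rcases hc.eq_or_lt with rfl | hc
  · simpa using hd
  rw [← le_div_iff₀ hc]
  exact Real.sSup_le (fun x hx => (le_div_iff₀ hc).2 (h x hx)) (div_nonneg hd hc.le)

theorem Real.iSup_mul_le_iff {ι : Type*} [Finite ι] (f : ι → ℝ) {c d : ℝ} (hc : 0 ≤ c)
    (hd : 0 ≤ d) : (⨆ i, f i) * c ≤ d ↔ ∀ i, f i * c ≤ d :=
  (Real.sSup_mul_le_iff (Set.finite_range f).bddAbove hc hd).trans forall_mem_range

theorem sSup_iSup_abs_mul_dualNorm_le_iff {r q : ℕ} {Θ : Set (Fin r → ℝ)}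
    (hΘ : Bornology.IsBounded Θ) (p : Seminorm ℝ (Fin q → ℝ)) (hp : ∀ x, p x = 0 → x = 0)
    {lam : ℝ} (hlam : 0 ≤ lam) (b : Fin q → ℝ) :
    sSup ((fun θ : Fin r → ℝ => ⨆ j, |θ j|) '' Θ) * dualNorm p b ≤ lam ↔
      ∀ θ ∈ Θ, ∀ j v, θ j * (v ⬝ᵥ b) ≤ lam * p v := by
  have hD := dualNorm_nonneg p b
  have hbdd : BddAbove ((fun θ : Fin r → ℝ => ⨆ j, |θ j|) '' Θ) := by
    obtain ⟨R, hR0, hR⟩ := hΘ.exists_pos_norm_le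
    exact ⟨R, forall_mem_image.2 fun θ hθ =>
      Real.iSup_le (fun j => (norm_le_pi_norm θ j).trans (hR θ hθ)) hR0.le⟩
  rw [Real.sSup_mul_le_iff hbdd hD hlam, forall_mem_image]
  exact forall₂_congr fun θ _ => (Real.iSup_mul_le_iff _ hD hlam).trans
    (forall_congr' fun j => mul_dualNorm_le_iff p hp hlam b)

theorem sub_mul_sum_le_of_forall_mul_dotProduct_le {r q : ℕ} {L : (Fin r → ℝ) → ℝ}
    (hL : ConvexOn ℝ univ L) (hLc : Continuous L) {N : (Fin q → ℝ) → ℝ} {lam : ℝ}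
    {b : Fin q → ℝ} (h : ∀ θ, fenchelConj L θ < ⊤ → ∀ j v, θ j * (v ⬝ᵥ b) ≤ lam * N v)
    (z zhat : Fin r → Fin q → ℝ) :
    L (fun j => z j ⬝ᵥ b) - lam * ∑ j, N (z j - zhat j) ≤ L (fun j => zhat j ⬝ᵥ b) := by
  obtain ⟨θ, hθ, hsub⟩ := hL.exists_fenchelConj_lt_top_subgradient hLc (fun j => z j ⬝ᵥ b)
  have hpair : θ ⬝ᵥ ((fun j => z j ⬝ᵥ b) - fun j => zhat j ⬝ᵥ b) ≤
      lam * ∑ j, N (z j - zhat j) := by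
    rw [Finset.mul_sum]
    exact Finset.sum_le_sum fun j _ => by
      simpa only [Pi.sub_apply, sub_dotProduct] using h θ hθ j (z j - zhat j)
  have := hsub (fun j => zhat j ⬝ᵥ b)
  rw [← neg_sub, dotProduct_neg] at this
  linarith

theorem iSup_sub_mul_sum_eq_top {r q : ℕ} {L : (Fin r → ℝ) → ℝ} {p : Seminorm ℝ (Fin q → ℝ)}
    {lam : ℝ} {b : Fin q → ℝ} {θ : Fin r → ℝ} (hθ : fenchelConj L θ < ⊤) {j₀ : Fin r}
    {v : Fin q → ℝ} (hv : lam * p v < θ j₀ * (v ⬝ᵥ b)) (zhat : Fin r → Fin q → ℝ) :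
    (⨆ z : Fin r → Fin q → ℝ,
      ((L (fun j => z j ⬝ᵥ b) - lam * ∑ j, p (z j - zhat j) : ℝ) : EReal)) = ⊤ := by
  obtain ⟨M, hM⟩ := fenchelConj_lt_top_iff.1 hθ
  set A := θ ⬝ᵥ (fun j => zhat j ⬝ᵥ b) - M with hA
  set δ := θ j₀ * (v ⬝ᵥ b) - lam * p v with hδ
  set ray : ℝ → Fin r → Fin q → ℝ := fun t => zhat + Pi.single j₀ (t • v)
  have hray : ∀ t : ℝ, 0 ≤ t →
      A + t * δ ≤ L (fun j => ray t j ⬝ᵥ b) - lam * ∑ j, p (ray t j - zhat j) := by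
    intro t ht
    have hpen : ∑ j, p (ray t j - zhat j) = t * p v := by
      simp only [ray, Pi.add_apply, add_sub_cancel_left]
      rw [Finset.sum_eq_single j₀ (fun j _ hj => by simp [hj]) (by simp)]
      simp [map_smul_eq_mul, abs_of_nonneg ht]
    have hs : (fun j => ray t j ⬝ᵥ b) = (fun j => zhat j ⬝ᵥ b) + Pi.single j₀ (t * (v ⬝ᵥ b)) := by
      funext j
      rcases eq_or_ne j j₀ with rfl | hj
      · simp [ray, add_dotProduct]
      · simp [ray, hj]
    have hpair : θ ⬝ᵥ (fun j => ray t j ⬝ᵥ b) =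
        θ ⬝ᵥ (fun j => zhat j ⬝ᵥ b) + t * (θ j₀ * (v ⬝ᵥ b)) := by
      rw [hs, dotProduct_add, dotProduct_single]
      ring
    have := hM (fun j => ray t j ⬝ᵥ b)
    rw [hpen]
    linarith
  rw [EReal.eq_top_iff_forall_lt]
  intro y
  have hδ0 : 0 < δ := sub_pos.2 hv
  set t := |y - A| / δ + 1
  have ht : t * δ = |y - A| + δ := by rw [add_mul, div_mul_cancel₀ _ hδ0.ne', one_mul]
  refine lt_of_lt_of_le ?_ (le_iSup_of_le (ray t) (EReal.coe_le_coe_iff.2 (hray t (by positivity))))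
  rw [EReal.coe_lt_coe_iff]
  linarith [le_abs_self (y - A)]

theorem robust_regularization_lemma_eq_general (r q : ℕ) (N : (Fin q → ℝ) → ℝ)
    (hNeq : ∀ x, N x = 0 ↔ x = 0)
    (hNsmul : ∀ (c : ℝ) (x : Fin q → ℝ), N (c • x) = |c| * N x)
    (hNadd : ∀ x y, N (x + y) ≤ N x + N y)
    (L : (Fin r → ℝ) → ℝ) (hLconv : ConvexOn ℝ Set.univ L) (hLcont : Continuous L)
    (hΘbdd : Bornology.IsBounded {θ : Fin r → ℝ | fenchelConj L θ < ⊤})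
    (lam : ℝ) (hlam : 0 < lam) (b : Fin q → ℝ) (zhat : Fin r → Fin q → ℝ) :
    (⨆ z : Fin r → Fin q → ℝ,
        ((L (fun j => ∑ i, z j i * b i) - lam * ∑ j, N (z j - zhat j) : ℝ) : EReal))
      = if sSup ((fun θ : Fin r → ℝ => ⨆ j, |θ j|) ''
            {θ : Fin r → ℝ | fenchelConj L θ < ⊤}) * dualNorm N b ≤ lam
        then ((L (fun j => ∑ i, zhat j i * b i) : ℝ) : EReal) else ⊤ := by
  let p : Seminorm ℝ (Fin q → ℝ) := Seminorm.of N hNadd hNsmul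
  have hcond : sSup ((fun θ : Fin r → ℝ => ⨆ j, |θ j|) '' {θ | fenchelConj L θ < ⊤}) *
      dualNorm N b ≤ lam ↔ ∀ θ, fenchelConj L θ < ⊤ → ∀ j v, θ j * (v ⬝ᵥ b) ≤ lam * p v :=
    sSup_iSup_abs_mul_dualNorm_le_iff hΘbdd p (fun x => (hNeq x).1) hlam.le b
  split_ifs with h
  · refine le_antisymm (iSup_le fun z => EReal.coe_le_coe_iff.2 ?_) (le_iSup_of_le zhat ?_)
    · exact sub_mul_sum_le_of_forall_mul_dotProduct_le hLconv hLcont (hcond.1 h) z zhat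
    · simp [(hNeq 0).2 rfl]
  · obtain ⟨θ, hθ, j₀, v, hv⟩ : ∃ θ, fenchelConj L θ < ⊤ ∧ ∃ j v, lam * p v < θ j * (v ⬝ᵥ b) := by
      simpa [hcond] using h
    exact iSup_sub_mul_sum_eq_top hθ hv zhat

/-- Lemma 1 of the paper (equality case, unconstrained supports): for convex continuous
`L : ℝʳ → ℝ` with bounded conjugate domain `Θ`, norm `N` on `ℝ^q`, `λ > 0`, `b ∈ ℝ^q`,
`ζ̂₁,…,ζ̂ᵣ ∈ ℝ^q`:
`sup_ζ L(⟨ζ₁,b⟩,…,⟨ζᵣ,b⟩) − λ Σⱼ‖ζⱼ − ζ̂ⱼ‖ = L(⟨ζ̂₁,b⟩,…,⟨ζ̂ᵣ,b⟩)` if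
`sup_{θ∈Θ}‖θ‖_∞ · ‖b‖_* ≤ λ`, and `+∞` otherwise. -/
theorem robust_regularization_lemma_eq (r q : ℕ) (N : (Fin q → ℝ) → ℝ)
    (hN0 : ∀ x, 0 ≤ N x) (hNeq : ∀ x, N x = 0 ↔ x = 0)
    (hNsmul : ∀ (c : ℝ) (x : Fin q → ℝ), N (c • x) = |c| * N x)
    (hNadd : ∀ x y, N (x + y) ≤ N x + N y)
    (L : (Fin r → ℝ) → ℝ) (hLconv : ConvexOn ℝ Set.univ L) (hLcont : Continuous L)
    (hΘbdd : Bornology.IsBounded {θ : Fin r → ℝ | fenchelConj L θ < ⊤})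
    (lam : ℝ) (hlam : 0 < lam) (b : Fin q → ℝ) (zhat : Fin r → Fin q → ℝ) :
    (⨆ z : Fin r → Fin q → ℝ,
        ((L (fun j => ∑ i, z j i * b i) - lam * ∑ j, N (z j - zhat j) : ℝ) : EReal))
      = if sSup ((fun θ : Fin r → ℝ => ⨆ j, |θ j|) ''
            {θ : Fin r → ℝ | fenchelConj L θ < ⊤}) * dualNorm N b ≤ lam
        then ((L (fun j => ∑ i, zhat j i * b i) : ℝ) : EReal) else ⊤ :=
  robust_regularization_lemma_eq_general r q N hNeq hNsmul hNadd L hLconv hLcont hΘbdd lam hlam b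
    zhat
end

section
/- Let L : ℝʳ → ℝ be convex and continuous with bounded conjugate effective domain, let Ωⱼ ⊆ ℝ^q for j = 1,…,r with ζ̂ⱼ ∈ Ωⱼ, λ > 0 and b ∈ ℝ^q. If sup_{θ ∈ Θ} ‖θ‖_∞ · ‖b‖_* ≤ λ where Θ = {θ : L*(θ) < ∞}, then sup over ζⱼ ∈ Ωⱼ of L(⟨ζ₁,b⟩,…,⟨ζᵣ,b⟩) − λ·Σⱼ‖ζⱼ − ζ̂ⱼ‖ ≤ L(⟨ζ̂₁,b⟩,…,⟨ζ̂ᵣ,b⟩). -/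
open scoped BigOperators

/-!
Fix `z` and put `s j = ⟨z j, b⟩`, `ŝ j = ⟨ẑ j, b⟩`. The slope `θ` of any affine minorant of `L`
lies in the effective domain `Θ` of `L*`, and since `L` is convex and lower semicontinuous there
are such minorants `t ↦ a + ⟨θ, t - s⟩` with `a` arbitrarily close to `L s`. Evaluating them at `ŝ`
gives `L s - L ŝ ≤ sup_{θ ∈ Θ} Σⱼ θⱼ ⟨z j - ẑ j, b⟩ ≤ sup_{θ ∈ Θ} ‖θ‖_∞ ‖b‖_* Σⱼ N (z j - ẑ j)`,
which is at most `λ Σⱼ N (z j - ẑ j)`.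
-/

open Matrix

section NormLike

variable {ι : Type*} [Fintype ι] {N : (ι → ℝ) → ℝ}

lemma exists_le_mul_norm_of_subadditive (hN0 : ∀ x, 0 ≤ N x)
    (hNsmul : ∀ (c : ℝ) x, N (c • x) = |c| * N x) (hNadd : ∀ x y, N (x + y) ≤ N x + N y) :
    ∃ C, ∀ v, N v ≤ C * ‖v‖ := by
  classical
  refine ⟨∑ i, N (Pi.single i 1), fun v => ?_⟩
  have hzero : N 0 ≤ 0 := by simpa using (hNsmul 0 0).le
  calc N v = N (∑ i, v i • Pi.single i 1) := by rw [← pi_eq_sum_univ']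
    _ ≤ ∑ i, N (v i • Pi.single i 1) := Finset.le_sum_of_subadditive N hzero hNadd _ _
    _ = ∑ i, |v i| * N (Pi.single i 1) := by simp only [hNsmul]
    _ ≤ ∑ i, ‖v‖ * N (Pi.single i 1) := by
      gcongr with i
      · exact hN0 _
      · exact norm_le_pi_norm v i
    _ = (∑ i, N (Pi.single i 1)) * ‖v‖ := by rw [← Finset.mul_sum, mul_comm]

lemma continuous_of_subadditive (hN0 : ∀ x, 0 ≤ N x)
    (hNsmul : ∀ (c : ℝ) x, N (c • x) = |c| * N x) (hNadd : ∀ x y, N (x + y) ≤ N x + N y) :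
    Continuous N := by
  obtain ⟨C, hC⟩ := exists_le_mul_norm_of_subadditive hN0 hNsmul hNadd
  refine (LipschitzWith.of_le_add_mul C.toNNReal fun x y => ?_).continuous
  calc N x = N (y + (x - y)) := by rw [add_sub_cancel]
    _ ≤ N y + C * ‖x - y‖ := (hNadd _ _).trans (by linarith [hC (x - y)])
    _ ≤ N y + C.toNNReal * dist x y := by
      rw [dist_eq_norm]; gcongr; exact Real.le_coe_toNNReal C

lemma exists_pos_mul_norm_le (hN0 : ∀ x, 0 ≤ N x) (hNeq : ∀ x, N x = 0 ↔ x = 0)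
    (hNsmul : ∀ (c : ℝ) x, N (c • x) = |c| * N x) (hNadd : ∀ x y, N (x + y) ≤ N x + N y) :
    ∃ m > 0, ∀ y, m * ‖y‖ ≤ N y := by
  rcases isEmpty_or_nonempty ι with hι | hι
  · exact ⟨1, one_pos, fun y => by simpa [Subsingleton.elim y 0] using hN0 0⟩
  obtain ⟨y₀, hy₀, hmin⟩ := (isCompact_sphere (0 : ι → ℝ) 1).exists_isMinOn
    (NormedSpace.sphere_nonempty.mpr zero_le_one)
    (continuous_of_subadditive hN0 hNsmul hNadd).continuousOn
  have hy₀ : ‖y₀‖ = 1 := by simpa using hy₀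
  have hm : 0 < N y₀ :=
    (hN0 y₀).lt_of_ne fun h => by simp [(hNeq y₀).mp h.symm] at hy₀
  refine ⟨N y₀, hm, fun y => ?_⟩
  rcases eq_or_ne y 0 with rfl | hy
  · simpa using hN0 0
  have hny : 0 < ‖y‖ := norm_pos_iff.mpr hy
  have hsphere : ‖y‖⁻¹ • y ∈ Metric.sphere (0 : ι → ℝ) 1 := by
    simp [norm_smul, hny.ne']
  have : N y₀ ≤ N (‖y‖⁻¹ • y) := hmin hsphere
  rw [hNsmul, abs_inv, abs_norm] at this
  calc N y₀ * ‖y‖ ≤ ‖y‖⁻¹ * N y * ‖y‖ := by gcongr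
    _ = N y := by field_simp

lemma isCompact_setOf_le_one (hN0 : ∀ x, 0 ≤ N x) (hNeq : ∀ x, N x = 0 ↔ x = 0)
    (hNsmul : ∀ (c : ℝ) x, N (c • x) = |c| * N x) (hNadd : ∀ x y, N (x + y) ≤ N x + N y) :
    IsCompact {y | N y ≤ 1} := by
  obtain ⟨m, hm, hmN⟩ := exists_pos_mul_norm_le hN0 hNeq hNsmul hNadd
  refine Metric.isCompact_of_isClosed_isBounded
    (isClosed_le (continuous_of_subadditive hN0 hNsmul hNadd) continuous_const) ?_
  refine (Metric.isBounded_iff_subset_closedBall 0).mpr ⟨m⁻¹, fun y hy => ?_⟩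
  rw [mem_closedBall_zero_iff, ← one_div, le_div_iff₀ hm]
  linarith [hmN y, show N y ≤ 1 from hy, mul_comm m ‖y‖]

end NormLike

section DualNorm

variable {n : ℕ} {N : (Fin n → ℝ) → ℝ}

lemma bddAbove_dualNorm_set (hN0 : ∀ x, 0 ≤ N x) (hNeq : ∀ x, N x = 0 ↔ x = 0)
    (hNsmul : ∀ (c : ℝ) x, N (c • x) = |c| * N x) (hNadd : ∀ x y, N (x + y) ≤ N x + N y)
    (θ : Fin n → ℝ) : BddAbove {r : ℝ | ∃ y, N y ≤ 1 ∧ r = ∑ i, θ i * y i} := by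
  have hset : {r : ℝ | ∃ y, N y ≤ 1 ∧ r = ∑ i, θ i * y i} = (θ ⬝ᵥ ·) '' {y | N y ≤ 1} :=
    Set.ext fun _ => exists_congr fun _ => and_congr_right' eq_comm
  rw [hset]
  exact (isCompact_setOf_le_one hN0 hNeq hNsmul hNadd).bddAbove_image
    (continuous_const.dotProduct continuous_id).continuousOn

lemma dualNorm_nonneg_s5 (hN0 : ∀ x, 0 ≤ N x) (hNeq : ∀ x, N x = 0 ↔ x = 0)
    (hNsmul : ∀ (c : ℝ) x, N (c • x) = |c| * N x) (hNadd : ∀ x y, N (x + y) ≤ N x + N y)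
    (θ : Fin n → ℝ) : 0 ≤ dualNorm N θ :=
  le_csSup (bddAbove_dualNorm_set hN0 hNeq hNsmul hNadd θ) ⟨0, by simp [(hNeq 0).mpr rfl]⟩

lemma dotProduct_le_mul_dualNorm (hN0 : ∀ x, 0 ≤ N x) (hNeq : ∀ x, N x = 0 ↔ x = 0)
    (hNsmul : ∀ (c : ℝ) x, N (c • x) = |c| * N x) (hNadd : ∀ x y, N (x + y) ≤ N x + N y)
    (θ y : Fin n → ℝ) : θ ⬝ᵥ y ≤ N y * dualNorm N θ := by
  rcases eq_or_ne y 0 with rfl | hy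
  · simp [(hNeq 0).mpr rfl]
  have hNy : 0 < N y := (hN0 y).lt_of_ne fun h => hy ((hNeq y).mp h.symm)
  have hunit : θ ⬝ᵥ ((N y)⁻¹ • y) ≤ dualNorm N θ :=
    le_csSup (bddAbove_dualNorm_set hN0 hNeq hNsmul hNadd θ)
      ⟨(N y)⁻¹ • y, by rw [hNsmul, abs_of_pos (inv_pos.mpr hNy), inv_mul_cancel₀ hNy.ne'], rfl⟩
  rw [dotProduct_smul, smul_eq_mul, inv_mul_le_iff₀ hNy] at hunit
  exact hunit

lemma mul_dotProduct_le_of_abs_le (hN0 : ∀ x, 0 ≤ N x) (hNeq : ∀ x, N x = 0 ↔ x = 0)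
    (hNsmul : ∀ (c : ℝ) x, N (c • x) = |c| * N x) (hNadd : ∀ x y, N (x + y) ≤ N x + N y)
    {θ : Fin n → ℝ} {t M lam : ℝ} (ht : |t| ≤ M) (hM : M * dualNorm N θ ≤ lam) (u : Fin n → ℝ) :
    t * (u ⬝ᵥ θ) ≤ lam * N u := by
  have hD := dualNorm_nonneg_s5 hN0 hNeq hNsmul hNadd θ
  calc t * (u ⬝ᵥ θ) = θ ⬝ᵥ (t • u) := by rw [dotProduct_smul, dotProduct_comm, smul_eq_mul]
    _ ≤ |t| * N u * dualNorm N θ := by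
      rw [← hNsmul]; exact dotProduct_le_mul_dualNorm hN0 hNeq hNsmul hNadd _ _
    _ ≤ M * N u * dualNorm N θ := by gcongr; exact hN0 u
    _ = M * dualNorm N θ * N u := by ring
    _ ≤ lam * N u := by gcongr; exact hN0 u

end DualNorm

section FenchelConj

variable {n : ℕ} {L : (Fin n → ℝ) → ℝ}

lemma fenchelConj_lt_top_of_affine_le {θ : Fin n → ℝ} {c : ℝ} (h : ∀ t, θ ⬝ᵥ t + c ≤ L t) :
    fenchelConj L θ < ⊤ :=
  lt_of_le_of_lt (iSup_le fun t => EReal.coe_le_coe_iff.mpr (show _ ≤ -c by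
    linarith [h t, show θ ⬝ᵥ t = ∑ j, θ j * t j from rfl]))
    (EReal.coe_lt_top _)

lemma exists_fenchelConj_lt_top_affine_le (hLconv : ConvexOn ℝ Set.univ L)
    (hLsc : LowerSemicontinuous L) {s : Fin n → ℝ} {a : ℝ} (ha : a < L s) :
    ∃ θ, fenchelConj L θ < ⊤ ∧ ∀ t, a + θ ⬝ᵥ (t - s) ≤ L t := by
  obtain ⟨l, c, hle, hs⟩ := hLconv.exists_affine_le_of_lt (𝕜 := ℝ) (Set.mem_univ s) ha
    isClosed_univ (hLsc.lowerSemicontinuousOn _)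
  have hl : ∀ t, l t = (fun i => l (Pi.single i 1)) ⬝ᵥ t := fun t => by
    conv_lhs => rw [pi_eq_sum_univ' t]
    simp only [map_sum, map_smul, smul_eq_mul, dotProduct, mul_comm]
  have haff : ∀ t, l t + c ≤ L t := fun t => by simpa using hle ⟨t, Set.mem_univ t⟩
  refine ⟨_, fenchelConj_lt_top_of_affine_le (fun t => (hl t).symm ▸ haff t), fun t => ?_⟩
  have hs : l s + c = a := by simpa using hs
  rw [dotProduct_sub, ← hl, ← hl, ← hs]
  linarith [haff t]

lemma sub_le_of_forall_fenchelConj_lt_top (hLconv : ConvexOn ℝ Set.univ L)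
    (hLsc : LowerSemicontinuous L) {s s' : Fin n → ℝ} {B : ℝ}
    (hB : ∀ θ, fenchelConj L θ < ⊤ → θ ⬝ᵥ (s - s') ≤ B) : L s - L s' ≤ B := by
  suffices L s ≤ L s' + B by linarith
  refine le_of_forall_lt_imp_le_of_dense fun a ha => ?_
  obtain ⟨θ, hθ, haff⟩ := exists_fenchelConj_lt_top_affine_le hLconv hLsc ha
  have := haff s'
  rw [← neg_sub, dotProduct_neg] at this
  linarith [hB θ hθ]

end FenchelConj

lemma abs_apply_le_sSup_image_iSup_abs {ι : Type*} [Fintype ι] {T : Set (ι → ℝ)}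
    (hT : Bornology.IsBounded T) {θ : ι → ℝ} (hθ : θ ∈ T) (j : ι) :
    |θ j| ≤ sSup ((fun θ : ι → ℝ => ⨆ j, |θ j|) '' T) := by
  have hle_norm : ∀ θ : ι → ℝ, ⨆ j, |θ j| ≤ ‖θ‖ := fun θ =>
    Real.iSup_le (fun j => norm_le_pi_norm θ j) (norm_nonneg θ)
  obtain ⟨R, hR⟩ := hT.exists_norm_le
  have hbdd : BddAbove ((fun θ : ι → ℝ => ⨆ j, |θ j|) '' T) :=
    ⟨R, Set.forall_mem_image.mpr fun θ hθ => (hle_norm θ).trans (hR θ hθ)⟩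
  exact (le_ciSup (Set.finite_range _).bddAbove j).trans (le_csSup hbdd ⟨θ, hθ, rfl⟩)

theorem robust_regularization_lemma_le_general (r q : ℕ) (N : (Fin q → ℝ) → ℝ)
    (hN0 : ∀ x, 0 ≤ N x) (hNeq : ∀ x, N x = 0 ↔ x = 0)
    (hNsmul : ∀ (c : ℝ) (x : Fin q → ℝ), N (c • x) = |c| * N x)
    (hNadd : ∀ x y, N (x + y) ≤ N x + N y)
    (L : (Fin r → ℝ) → ℝ) (hLconv : ConvexOn ℝ Set.univ L) (hLcont : Continuous L)
    (hΘbdd : Bornology.IsBounded {θ : Fin r → ℝ | fenchelConj L θ < ⊤})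
    (Ω : Fin r → Set (Fin q → ℝ)) (zhat : Fin r → Fin q → ℝ)
    (lam : ℝ) (b : Fin q → ℝ)
    (hcond : sSup ((fun θ : Fin r → ℝ => ⨆ j, |θ j|) ''
        {θ : Fin r → ℝ | fenchelConj L θ < ⊤}) * dualNorm N b ≤ lam) :
    (⨆ z : {z : Fin r → Fin q → ℝ // ∀ j, z j ∈ Ω j},
        ((L (fun j => ∑ i, z.1 j i * b i) - lam * ∑ j, N (z.1 j - zhat j) : ℝ) : EReal))
      ≤ ((L (fun j => ∑ i, zhat j i * b i) : ℝ) : EReal) := by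
  refine iSup_le fun ⟨z, _⟩ => EReal.coe_le_coe_iff.mpr ?_
  suffices L (fun j => z j ⬝ᵥ b) - L (fun j => zhat j ⬝ᵥ b) ≤ lam * ∑ j, N (z j - zhat j) by
    simp only [dotProduct] at this; linarith
  refine sub_le_of_forall_fenchelConj_lt_top hLconv hLcont.lowerSemicontinuous fun θ hθ => ?_
  calc θ ⬝ᵥ ((fun j => z j ⬝ᵥ b) - fun j => zhat j ⬝ᵥ b)
      = ∑ j, θ j * ((z j - zhat j) ⬝ᵥ b) := by simp only [sub_dotProduct]; rfl
    _ ≤ ∑ j, lam * N (z j - zhat j) := Finset.sum_le_sum fun j _ =>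
      mul_dotProduct_le_of_abs_le hN0 hNeq hNsmul hNadd
        (abs_apply_le_sSup_image_iSup_abs hΘbdd hθ j) hcond _
    _ = lam * ∑ j, N (z j - zhat j) := Finset.mul_sum _ _ _ |>.symm

/-- Lemma 1 of the paper, inequality direction with arbitrary support sets `Ωⱼ`:
if `sup_{θ∈Θ}‖θ‖_∞ · ‖b‖_* ≤ λ` then
`sup_{ζⱼ∈Ωⱼ} L(⟨ζ₁,b⟩,…,⟨ζᵣ,b⟩) − λ Σⱼ‖ζⱼ − ζ̂ⱼ‖ ≤ L(⟨ζ̂₁,b⟩,…,⟨ζ̂ᵣ,b⟩)`. -/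
theorem robust_regularization_lemma_le (r q : ℕ) (N : (Fin q → ℝ) → ℝ)
    (hN0 : ∀ x, 0 ≤ N x) (hNeq : ∀ x, N x = 0 ↔ x = 0)
    (hNsmul : ∀ (c : ℝ) (x : Fin q → ℝ), N (c • x) = |c| * N x)
    (hNadd : ∀ x y, N (x + y) ≤ N x + N y)
    (L : (Fin r → ℝ) → ℝ) (hLconv : ConvexOn ℝ Set.univ L) (hLcont : Continuous L)
    (hΘbdd : Bornology.IsBounded {θ : Fin r → ℝ | fenchelConj L θ < ⊤})
    (Ω : Fin r → Set (Fin q → ℝ)) (zhat : Fin r → Fin q → ℝ)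
    (hmem : ∀ j, zhat j ∈ Ω j)
    (lam : ℝ) (hlam : 0 < lam) (b : Fin q → ℝ)
    (hcond : sSup ((fun θ : Fin r → ℝ => ⨆ j, |θ j|) ''
        {θ : Fin r → ℝ | fenchelConj L θ < ⊤}) * dualNorm N b ≤ lam) :
    (⨆ z : {z : Fin r → Fin q → ℝ // ∀ j, z j ∈ Ω j},
        ((L (fun j => ∑ i, z.1 j i * b i) - lam * ∑ j, N (z.1 j - zhat j) : ℝ) : EReal))
      ≤ ((L (fun j => ∑ i, zhat j i * b i) : ℝ) : EReal) :=
  robust_regularization_lemma_le_general r q N hN0 hNeq hNsmul hNadd L hLconv hLcont hΘbdd Ω zhat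
    lam b hcond
end
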